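/- For every integer n ≥ 6, the three-element vertex set {p_2, p_{⌊n/2⌋+1}, p_n} is a resolving set of the heptagonal circular ladder Γ_n; i.e., any two distinct vertices of Γ_n have different distance vectors to (p_2, p_{⌊n/2⌋+1}, p_n). -/

import Mathlib

/-- Vertices of the heptagonal circular ladder: four families indexed by `ZMod n`. -/
inductive HCLVertex (n : ℕ) : Type
  | p (t : ZMod n) : HCLVertex n
  | q (t : ZMod n) : HCLVertex n
  | r (t : ZMod n) : HCLVertex n
  | s (t : ZMod n) : HCLVertex n
deriving DecidableEq

/-- Base relation giving the edges of the heptagonal circular ladder `Γ_n`: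
`p_t p_{t+1}`, `p_t q_t`, `q_t r_t`, `r_t s_t`, `s_t r_{t+1}` (indices mod `n`). -/
def gammaRel (n : ℕ) : HCLVertex n → HCLVertex n → Prop
  | .p t, .p u => u = t + 1
  | .p t, .q u => u = t
  | .q t, .r u => u = t
  | .r t, .s u => u = t
  | .s t, .r u => u = t + 1
  | _, _ => False

/-- The heptagonal circular ladder `Γ_n`. -/
def Gamma (n : ℕ) : SimpleGraph (HCLVertex n) :=
  SimpleGraph.fromRel (gammaRel n)

/-- The extra edges `r_t q_{t+1}` added to `Γ_n` to obtain `Δ_n`. -/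
def deltaRel (n : ℕ) : HCLVertex n → HCLVertex n → Prop
  | .r t, .q u => u = t + 1
  | _, _ => False

/-- The convex polytope graph `Δ_n`, obtained from `Γ_n` by adding the edges `r_t q_{t+1}`. -/
def Delta (n : ℕ) : SimpleGraph (HCLVertex n) :=
  SimpleGraph.fromRel (fun v w => gammaRel n v w ∨ deltaRel n v w)

/-- `W` is a resolving set of `G`: every pair of distinct vertices is distinguished by
its distance to some vertex of `W`. -/
def IsResolving {V : Type*} (G : SimpleGraph V) (W : Set V) : Prop :=
  ∀ u v : V, u ≠ v → ∃ w ∈ W, G.dist w u ≠ G.dist w v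

/-- Distance from a vertex `x` to an edge `e = yz`: `min (d x y) (d x z)`. -/
noncomputable def edgeDist {V : Type*} (G : SimpleGraph V) (x : V) (e : Sym2 V) : ℕ :=
  Sym2.lift ⟨fun y z => min (G.dist x y) (G.dist x z), fun y z => min_comm _ _⟩ e

/-- `W` is an edge resolving set of `G`: every pair of distinct edges is distinguished by
its distance to some vertex of `W`. -/
def IsEdgeResolving {V : Type*} (G : SimpleGraph V) (W : Set V) : Prop :=
  ∀ e ∈ G.edgeSet, ∀ f ∈ G.edgeSet, e ≠ f → ∃ w ∈ W, edgeDist G w e ≠ edgeDist G w f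

/-!
Write `|a| = a.valMinAbs.natAbs` for the distance from `0` to `a ∈ ℤ/n` on the `n`-cycle. Then
`d(p_w, p_t) = |t - w|`, `q_t` and `r_t` are one and two steps further, and
`d(p_w, s_t) = min |t - w| |t + 1 - w| + 3`: this function changes by at most one along every edge
and decreases along some edge out of every vertex other than `p_w`. Placing `p_t, q_t, r_t` at `2t`
and `s_t` at `2t + 1` on a cycle of length `2n`, twice this distance becomes the cyclic distance
from `2w` plus a height `0, 2, 4, 5` that depends only on the kind of vertex.

The landmarks `p_n = p_0`, `p_2`, `p_{⌊n/2⌋+1}` sit at `0`, `4` and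
`M = 2 (⌊n/2⌋ + 1) ∈ {n + 1, n + 2}`. The difference of the cyclic distances to `0` and to `4` is
`4` on the arc `[4, n]`, `-4` on the arc `[n + 4, 2n]`, and injective on each of the two short arcs
in between. So two vertices with the same distances either lie on the same long arc, where the
distances to `0` and to `M` determine both position and height, or lie on short arcs, where the
distance to `M` separates them.
-/

open SimpleGraph

lemma ZMod.val_add_eq_or {n : ℕ} [NeZero n] (a b : ZMod n) :
    (a + b).val = a.val + b.val ∨ (a + b).val + n = a.val + b.val := by
  rcases Nat.lt_or_ge (a.val + b.val) n with h | h
  · exact Or.inl (ZMod.val_add_of_lt h)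
  · have := ZMod.val_add_of_le h
    have := a.val_lt
    omega

lemma ZMod.val_add_one_eq_or {n : ℕ} [NeZero n] (a : ZMod n) :
    (a + 1).val = a.val + 1 ∨ (a + 1).val = 0 ∧ a.val + 1 = n := by
  have ha := a.val_lt
  rw [ZMod.val_add, ZMod.val_one_eq_one_mod, Nat.add_mod_mod]
  rcases Nat.lt_or_ge (a.val + 1) n with h | h
  · exact Or.inl (Nat.mod_eq_of_lt h)
  · exact Or.inr ⟨by rw [show a.val + 1 = n by omega, Nat.mod_self], by omega⟩

def cycDist (N x y : ℕ) : ℕ := min (Nat.dist x y) (N - Nat.dist x y)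

lemma cycDist_landmarks_cases {n x M : ℕ} (hn : 4 ≤ n) (hnM : n < M) (hMn : M ≤ n + 2)
    (hx : x < 2 * n) :
    1 ≤ x ∧ x ≤ 3 ∧ cycDist (2 * n) x 0 = x ∧ cycDist (2 * n) x 4 = 4 - x ∧
      n - 2 ≤ cycDist (2 * n) x M ∨
    4 ≤ x ∧ x ≤ n ∧ cycDist (2 * n) x 0 = x ∧ cycDist (2 * n) x 4 = x - 4 ∧
      cycDist (2 * n) x M = M - x ∨
    n < x ∧ x < n + 4 ∧ cycDist (2 * n) x 0 = 2 * n - x ∧ cycDist (2 * n) x 4 = x - 4 ∧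
      cycDist (2 * n) x M ≤ 2 ∨
    (x = 0 ∧ cycDist (2 * n) x 0 = 0 ∨ n + 4 ≤ x ∧ cycDist (2 * n) x 0 = 2 * n - x) ∧
      cycDist (2 * n) x 4 = cycDist (2 * n) x 0 + 4 ∧
      cycDist (2 * n) x 0 + cycDist (2 * n) x M = 2 * n - M := by
  simp only [cycDist, Nat.dist]
  rcases (by omega : 1 ≤ x ∧ x ≤ 3 ∨ 4 ≤ x ∧ x ≤ n ∨ n < x ∧ x < n + 4 ∨ x = 0 ∨ n + 4 ≤ x)
    with h | h | h | h | h
  · exact Or.inl ⟨h.1, h.2, by omega, by omega, by omega⟩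
  · exact Or.inr <| Or.inl ⟨h.1, h.2, by omega, by omega, by omega⟩
  · exact Or.inr <| Or.inr <| Or.inl ⟨h.1, h.2, by omega, by omega, by omega⟩
  · exact Or.inr <| Or.inr <| Or.inr ⟨Or.inl ⟨h, by omega⟩, by omega, by omega⟩
  · exact Or.inr <| Or.inr <| Or.inr ⟨Or.inr ⟨h, by omega⟩, by omega, by omega⟩

lemma eq_and_eq_of_cycDist_add_eq {n M x y a b : ℕ} (hn : 5 ≤ n) (hnM : n < M)
    (hMn : M ≤ n + 2) (hx : x < 2 * n) (hy : y < 2 * n)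
    (h₀ : cycDist (2 * n) x 0 + a = cycDist (2 * n) y 0 + b)
    (h₄ : cycDist (2 * n) x 4 + a = cycDist (2 * n) y 4 + b)
    (hM : cycDist (2 * n) x M + a = cycDist (2 * n) y M + b) :
    x = y ∧ a = b := by
  rcases cycDist_landmarks_cases (by omega) hnM hMn hx with hx' | hx' | hx' | hx' <;>
  rcases cycDist_landmarks_cases (by omega) hnM hMn hy with hy' | hy' | hy' | hy' <;>
  omega

namespace HCLVertex

variable {n : ℕ}

def pos : HCLVertex n → ℕ
  | p t | q t | r t => 2 * t.val
  | s t => 2 * t.val + 1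

def height : HCLVertex n → ℕ
  | p _ => 0
  | q _ => 2
  | r _ => 4
  | s _ => 5

variable [NeZero n]

lemma pos_lt (v : HCLVertex n) : v.pos < 2 * n := by
  rcases v with t | t | t | t <;> have := t.val_lt <;> simp only [pos] <;> omega

lemma eq_of_pos_eq_of_height_eq {u v : HCLVertex n} (hpos : u.pos = v.pos)
    (hheight : u.height = v.height) : u = v := by
  rcases u with t | t | t | t <;> rcases v with t' | t' | t' | t' <;>
    simp only [pos, height] at hpos hheight <;> (try omega) <;>
    exact congrArg _ (ZMod.val_injective n (by omega))

end HCLVertex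

namespace Gamma

open HCLVertex

variable {n : ℕ}

lemma adj_iff {u v : HCLVertex n} :
    (Gamma n).Adj u v ↔ u ≠ v ∧ (gammaRel n u v ∨ gammaRel n v u) :=
  fromRel_adj _ _ _

def distFromP (w : ZMod n) : HCLVertex n → ℕ
  | p t => (t - w).valMinAbs.natAbs
  | q t => (t - w).valMinAbs.natAbs + 1
  | r t => (t - w).valMinAbs.natAbs + 2
  | s t => min (t - w).valMinAbs.natAbs (t + 1 - w).valMinAbs.natAbs + 3

lemma distFromP_self (w : ZMod n) : distFromP w (p w) = 0 := by
  simp [distFromP]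

variable [NeZero n]

lemma distFromP_le_of_gammaRel (w : ZMod n) {u v : HCLVertex n} (h : gammaRel n u v) :
    distFromP w v ≤ distFromP w u + 1 ∧ distFromP w u ≤ distFromP w v + 1 := by
  rcases u with t | t | t | t <;> rcases v with t' | t' | t' | t' <;>
    simp only [gammaRel] at h <;> subst t' <;>
    simp only [distFromP, add_sub_right_comm _ 1 w] <;>
    generalize t - w = a <;>
    have := a.val_lt <;> have := ZMod.val_add_one_eq_or a <;>
    simp only [ZMod.valMinAbs_natAbs_eq_min] <;> omega

lemma distFromP_le_of_adj (w : ZMod n) {u v : HCLVertex n} (h : (Gamma n).Adj u v) :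
    distFromP w v ≤ distFromP w u + 1 := by
  rcases (adj_iff.1 h).2 with h | h
  exacts [(distFromP_le_of_gammaRel w h).1, (distFromP_le_of_gammaRel w h).2]

lemma distFromP_le_length (w : ZMod n) {u v : HCLVertex n} (pa : (Gamma n).Walk u v) :
    distFromP w v ≤ distFromP w u + pa.length := by
  induction pa with
  | nil => simp
  | cons h _ ih =>
    have := distFromP_le_of_adj w h
    rw [Walk.length_cons]
    omega

lemma exists_gammaRel_distFromP_succ {w : ZMod n} {v : HCLVertex n} (hv : v ≠ p w) :
    ∃ u, (gammaRel n u v ∨ gammaRel n v u) ∧ distFromP w u + 1 = distFromP w v := by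
  rcases v with t | t | t | t
  · have hne : t - w ≠ 0 := fun h => hv (congrArg p (sub_eq_zero.1 h))
    by_cases h : distFromP w (p (t + 1)) + 1 = distFromP w (p t)
    · exact ⟨p (t + 1), Or.inr rfl, h⟩
    · refine ⟨p (t - 1), Or.inl (sub_add_cancel t 1).symm, ?_⟩
      simp only [distFromP, add_sub_right_comm _ 1 w, sub_right_comm _ 1 w] at h ⊢
      generalize t - w = a at h hne ⊢
      have ha := a.val_lt
      have ha₀ : a.val ≠ 0 := (ZMod.val_eq_zero a).not.2 hne
      have hsucc := ZMod.val_add_one_eq_or a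
      have hpred := ZMod.val_add_one_eq_or (a - 1)
      rw [sub_add_cancel] at hpred
      simp only [ZMod.valMinAbs_natAbs_eq_min] at h ⊢
      omega
  · exact ⟨p t, Or.inl rfl, rfl⟩
  · exact ⟨q t, Or.inl rfl, rfl⟩
  · by_cases h : distFromP w (r t) + 1 = distFromP w (s t)
    · exact ⟨r t, Or.inl rfl, h⟩
    · refine ⟨r (t + 1), Or.inr rfl, ?_⟩
      simp only [distFromP] at h ⊢
      omega

lemma exists_walk_length_eq_distFromP (w : ZMod n) (v : HCLVertex n) :
    ∃ pa : (Gamma n).Walk (p w) v, pa.length = distFromP w v := by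
  by_cases hv : v = p w
  · subst hv
    exact ⟨Walk.nil, (distFromP_self w).symm⟩
  · obtain ⟨u, hrel, hu⟩ := exists_gammaRel_distFromP_succ hv
    have huv : u ≠ v := by rintro rfl; omega
    obtain ⟨pa, hpa⟩ := exists_walk_length_eq_distFromP w u
    exact ⟨pa.concat (adj_iff.2 ⟨huv, hrel⟩), by rw [Walk.length_concat, hpa, hu]⟩
termination_by distFromP w v
decreasing_by omega

theorem dist_p_eq (w : ZMod n) (v : HCLVertex n) : (Gamma n).dist (p w) v = distFromP w v := by
  obtain ⟨pa, hpa⟩ := exists_walk_length_eq_distFromP w v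
  obtain ⟨qa, hqa⟩ := Reachable.exists_walk_length_eq_dist ⟨pa⟩
  have := distFromP_le_length w qa
  rw [distFromP_self, zero_add, hqa] at this
  exact le_antisymm (hpa ▸ dist_le pa) this

lemma two_mul_distFromP (w : ZMod n) (v : HCLVertex n) :
    2 * distFromP w v = cycDist (2 * n) v.pos (2 * w.val) + v.height := by
  have hw := w.val_lt
  rcases v with t | t | t | t <;>
    have ht := ZMod.val_add_eq_or (t - w) w <;> rw [sub_add_cancel] at ht <;>
    have := (t - w).val_lt <;> have := ZMod.val_add_one_eq_or (t - w) <;>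
    simp only [distFromP, pos, height, cycDist, Nat.dist, add_sub_right_comm _ 1 w,
      ZMod.valMinAbs_natAbs_eq_min] <;> omega

lemma cycDist_add_height_eq_of_dist_eq {w : ZMod n} {u v : HCLVertex n}
    (h : (Gamma n).dist (p w) u = (Gamma n).dist (p w) v) :
    cycDist (2 * n) u.pos (2 * w.val) + u.height = cycDist (2 * n) v.pos (2 * w.val) + v.height := by
  rw [← two_mul_distFromP, ← two_mul_distFromP, ← dist_p_eq, ← dist_p_eq, h]

end Gamma

theorem gamma_resolving_p_set (n : ℕ) (hn : 6 ≤ n) :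
    IsResolving (Gamma n)
      {HCLVertex.p (2 : ZMod n), HCLVertex.p ((n / 2 + 1 : ℕ) : ZMod n),
        HCLVertex.p ((n : ℕ) : ZMod n)} := by
  have : NeZero n := ⟨by omega⟩
  intro u v huv
  by_contra! h
  have h₀ := Gamma.cycDist_add_height_eq_of_dist_eq (h (.p (n : ZMod n)) (by simp))
  have h₄ := Gamma.cycDist_add_height_eq_of_dist_eq (h (.p 2) (by simp))
  have hM := Gamma.cycDist_add_height_eq_of_dist_eq (h (.p (n / 2 + 1 : ℕ)) (by simp))
  rw [ZMod.natCast_self, ZMod.val_zero] at h₀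
  rw [ZMod.val_ofNat_of_lt (show 2 < n by omega)] at h₄
  rw [ZMod.val_natCast_of_lt (by omega)] at hM
  obtain ⟨hpos, hheight⟩ := eq_and_eq_of_cycDist_add_eq (by omega) (by omega) (by omega)
    u.pos_lt v.pos_lt h₀ h₄ hM
  exact huv (HCLVertex.eq_of_pos_eq_of_height_eq hpos hheight)
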